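/- Let E be a real inner product space, λ ∈ ℝ, and f : E → ℝ a λ-concave continuously differentiable function. Let α : [0, ∞) → E be an f-gradient curve. Then for all t ≥ 0, f(α(t)) − f(α(0)) ≤ ‖∇f(α(0))‖²·( θ_λ(t) + (λ/2)·θ_λ(t)² ), where θ_λ(t) = t if λ = 0 and θ_λ(t) = (e^{λt} − 1)/λ if λ ≠ 0. -/

import Mathlib

/-!
Concavity of `f - (λ/2)‖·‖²` makes the gradient field one-sided Lipschitz,
`⟪∇f x - ∇f y, x - y⟫ ≤ λ‖x - y‖²`, so by Grönwall two gradient curves separate at rate at most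
`e^{λt}`. Comparing `α` with its time shift `α (· + ε)` gives `‖∇f (α t)‖ ≤ e^{λt} ‖∇f (α 0)‖`.
Hence `(f ∘ α)' = ‖∇f ∘ α‖² ≤ e^{2λt} ‖∇f (α 0)‖²`, and the right-hand side of the estimate is
its integral, since `θ_λ + (λ/2) θ_λ² = θ_{2λ}` is the primitive of `e^{2λt}` vanishing at `0`.
-/

open scoped RealInnerProductSpace

/-- The function `θ_λ` of Lemma 2.4. -/
noncomputable def thetaLam (lam t : ℝ) : ℝ :=
  if lam = 0 then t else (Real.exp (lam * t) - 1) / lam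

open Set Filter Topology

theorem Real.exp_two_mul_mul (a t : ℝ) : Real.exp (2 * a * t) = Real.exp (a * t) ^ 2 := by
  rw [sq, ← Real.exp_add]; ring_nf

theorem thetaLam_zero_right (lam : ℝ) : thetaLam lam 0 = 0 := by
  unfold thetaLam; split_ifs <;> simp

theorem hasDerivAt_thetaLam (lam t : ℝ) : HasDerivAt (thetaLam lam) (Real.exp (lam * t)) t := by
  unfold thetaLam
  split_ifs with h
  · simpa [h] using hasDerivAt_id' t
  · refine ((((hasDerivAt_id' t).const_mul lam).exp.sub_const 1).div_const lam).congr_deriv ?_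
    field_simp

theorem thetaLam_add_half_mul_sq (lam t : ℝ) :
    thetaLam lam t + lam / 2 * thetaLam lam t ^ 2 = thetaLam (2 * lam) t := by
  by_cases h : lam = 0
  · simp [thetaLam, h]
  · have h2 : 2 * lam ≠ 0 := mul_ne_zero two_ne_zero h
    simp only [thetaLam, if_neg h, if_neg h2, Real.exp_two_mul_mul]
    field_simp
    ring

section InnerProductSpace

variable {E : Type*} [NormedAddCommGroup E] [InnerProductSpace ℝ E]

theorem ConcaveOn.inner_sub_gradient_nonpos {F : E → ℝ} {G : E → E}
    (hF : ConcaveOn ℝ univ F) (hG : ∀ x, HasFDerivAt F (innerSL ℝ (G x)) x) (x y : E) :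
    ⟪G x - G y, x - y⟫ ≤ 0 := by
  have hline : ∀ t : ℝ, HasDerivAt (F ∘ AffineMap.lineMap y x)
      ⟪G (AffineMap.lineMap y x t), x - y⟫ t := fun t =>
    (hG _).comp_hasDerivAt t AffineMap.hasDerivAt_lineMap
  have hanti := (hF.comp_affineMap (AffineMap.lineMap y x)).antitoneOn_deriv
    (fun t _ => (hline t).differentiableAt) (mem_univ 0) (mem_univ 1) zero_le_one
  rw [(hline 0).deriv, (hline 1).deriv, AffineMap.lineMap_apply_zero,
    AffineMap.lineMap_apply_one] at hanti
  rw [inner_sub_left]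
  linarith

theorem inner_sub_le_of_concaveOn_sub_sq {lam : ℝ} {f : E → ℝ} {g : E → E}
    (hconc : ConcaveOn ℝ univ (fun x => f x - lam / 2 * ‖x‖ ^ 2))
    (hg : ∀ x, HasFDerivAt f (innerSL ℝ (g x)) x) (x y : E) :
    ⟪g x - g y, x - y⟫ ≤ lam * ‖x - y‖ ^ 2 := by
  have hG : ∀ z, HasFDerivAt (fun x => f x - lam / 2 * ‖x‖ ^ 2)
      (innerSL ℝ (g z - lam • z)) z := fun z => by
    have hsq : HasFDerivAt (fun x : E => ‖x‖ ^ 2) (2 • innerSL ℝ z) z :=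
      (hasFDerivAt_id z).norm_sq
    refine ((hg z).sub (hsq.const_mul (lam / 2))).congr_fderiv ?_
    ext u
    simp only [sub_apply, coe_innerSL_apply, smul_apply,
      nsmul_eq_mul, Nat.cast_ofNat, smul_eq_mul, map_sub, map_smul, sub_right_inj]
    ring
  have h := hconc.inner_sub_gradient_nonpos hG x y
  rw [sub_sub_sub_comm, ← smul_sub, inner_sub_left, real_inner_smul_left,
    real_inner_self_eq_norm_sq] at h
  linarith

theorem norm_sub_le_exp_mul_of_inner_sub_le {lam : ℝ} {g : E → E}
    (hg : ∀ x y, ⟪g x - g y, x - y⟫ ≤ lam * ‖x - y‖ ^ 2) {β γ : ℝ → E}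
    (hβ : ∀ t ∈ Ici (0 : ℝ), HasDerivWithinAt β (g (β t)) (Ici 0) t)
    (hγ : ∀ t ∈ Ici (0 : ℝ), HasDerivWithinAt γ (g (γ t)) (Ici 0) t) {t : ℝ} (ht : 0 ≤ t) :
    ‖β t - γ t‖ ≤ Real.exp (lam * t) * ‖β 0 - γ 0‖ := by
  have hderiv : ∀ s ∈ Ici (0 : ℝ), HasDerivWithinAt (fun s => ‖β s - γ s‖ ^ 2)
      (2 * ⟪β s - γ s, g (β s) - g (γ s)⟫) (Ici 0) s :=
    fun s hs => ((hβ s hs).sub (hγ s hs)).norm_sq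
  have hsq : ‖β t - γ t‖ ^ 2 ≤ ‖β 0 - γ 0‖ ^ 2 * Real.exp (2 * lam * t) := by
    have := le_gronwallBound_of_liminf_deriv_right_le (a := 0) (b := t) (K := 2 * lam) (ε := 0)
      (fun s hs => (hderiv s hs.1).continuousWithinAt.mono Icc_subset_Ici_self)
      (fun s hs _ hr => ((hderiv s hs.1).mono (Ici_subset_Ici.2 hs.1)).liminf_right_slope_le hr)
      le_rfl (fun s _ => by rw [real_inner_comm]; linarith [hg (β s) (γ s)]) t ⟨ht, le_rfl⟩
    rwa [gronwallBound_ε0, sub_zero] at this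
  rw [Real.exp_two_mul_mul, ← mul_pow, mul_comm] at hsq
  exact pow_le_pow_iff_left₀ (norm_nonneg _) (by positivity) two_ne_zero |>.1 hsq

theorem HasDerivWithinAt.tendsto_slope_zero_right_of_Ici {α : ℝ → E} {a : E} {s : ℝ}
    (h : HasDerivWithinAt α a (Ici s) s) :
    Tendsto (fun ε : ℝ => ε⁻¹ • (α (s + ε) - α s)) (𝓝[>] 0) (𝓝 a) := by
  have hslope := (hasDerivWithinAt_iff_tendsto_slope' (lt_irrefl s)).1 h.Ioi_of_Ici
  have hshift : Tendsto (s + ·) (𝓝[>] (0 : ℝ)) (𝓝[>] s) := by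
    have := (map_add_left_nhdsGT (c := s) (a := (0 : ℝ))).le
    rwa [add_zero] at this
  simpa [Function.comp_def, slope_def_module] using hslope.comp hshift

theorem norm_le_exp_mul_of_inner_sub_le {lam : ℝ} {g : E → E}
    (hg : ∀ x y, ⟪g x - g y, x - y⟫ ≤ lam * ‖x - y‖ ^ 2) {α : ℝ → E}
    (hα : ∀ t ∈ Ici (0 : ℝ), HasDerivWithinAt α (g (α t)) (Ici 0) t) {t : ℝ} (ht : 0 ≤ t) :
    ‖g (α t)‖ ≤ Real.exp (lam * t) * ‖g (α 0)‖ := by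
  have hslope : ∀ s ∈ Ici (0 : ℝ), Tendsto (fun ε : ℝ => ‖ε⁻¹ • (α (s + ε) - α s)‖) (𝓝[>] 0)
      (𝓝 ‖g (α s)‖) := fun s hs =>
    (((hα s hs).mono (Ici_subset_Ici.2 hs)).tendsto_slope_zero_right_of_Ici).norm
  refine le_of_tendsto_of_tendsto (hslope t ht) ((hslope 0 self_mem_Ici).const_mul _) ?_
  filter_upwards [self_mem_nhdsWithin] with ε (hε : 0 < ε)
  have hshift : ∀ s ∈ Ici (0 : ℝ), HasDerivWithinAt (fun s => α (s + ε)) (g (α (s + ε))) (Ici 0) s :=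
    fun s (hs : 0 ≤ s) => by
      simpa [Function.comp_def] using (hα (s + ε) (by simp only [mem_Ici]; linarith)).scomp s
        ((hasDerivAt_id' s).add_const ε).hasDerivWithinAt (s := Ici 0)
        (fun r (hr : 0 ≤ r) => show 0 ≤ r + ε by linarith)
  have hdist := norm_sub_le_exp_mul_of_inner_sub_le hg hshift hα ht
  rw [zero_add] at hdist
  rw [norm_smul, norm_smul, zero_add, mul_left_comm]
  exact mul_le_mul_of_nonneg_left hdist (norm_nonneg _)

end InnerProductSpace

theorem gradient_curve_value_growth_est_general
    {E : Type*} [NormedAddCommGroup E] [InnerProductSpace ℝ E]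
    (lam : ℝ) (f : E → ℝ) (g : E → E)
    (hconc : ConcaveOn ℝ Set.univ (fun x => f x - lam / 2 * ‖x‖ ^ 2))
    (hg : ∀ x, HasFDerivAt f (innerSL ℝ (g x)) x)
    (α : ℝ → E)
    (hα : ∀ t ∈ Set.Ici (0 : ℝ), HasDerivWithinAt α (g (α t)) (Set.Ici 0) t) :
    ∀ t ≥ (0 : ℝ),
      f (α t) - f (α 0) ≤ ‖g (α 0)‖ ^ 2 * (thetaLam lam t + lam / 2 * (thetaLam lam t) ^ 2) := by
  intro t ht
  have hfα : ∀ s ∈ Ici (0 : ℝ), HasDerivWithinAt (fun s => f (α s) - f (α 0)) (‖g (α s)‖ ^ 2)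
      (Ici 0) s := fun s hs => by
    simpa [Function.comp_def, real_inner_self_eq_norm_sq] using
      ((hg (α s)).comp_hasDerivWithinAt s (hα s hs)).sub_const (f (α 0))
  have hB : ∀ s, HasDerivAt (fun s => ‖g (α 0)‖ ^ 2 * thetaLam (2 * lam) s)
      (‖g (α 0)‖ ^ 2 * Real.exp (2 * lam * s)) s := fun s =>
    (hasDerivAt_thetaLam (2 * lam) s).const_mul _
  have hgrad : ∀ s ∈ Ico 0 t, ‖g (α s)‖ ^ 2 ≤ ‖g (α 0)‖ ^ 2 * Real.exp (2 * lam * s) := by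
    intro s hs
    rw [Real.exp_two_mul_mul, ← mul_pow, mul_comm]
    exact pow_le_pow_left₀ (norm_nonneg _)
      (norm_le_exp_mul_of_inner_sub_le (inner_sub_le_of_concaveOn_sub_sq hconc hg) hα hs.1) 2
  rw [thetaLam_add_half_mul_sq]
  refine image_le_of_deriv_right_le_deriv_boundary
    (fun s hs => (hfα s hs.1).continuousWithinAt.mono Icc_subset_Ici_self)
    (fun s hs => (hfα s hs.1).mono (Ici_subset_Ici.2 hs.1))
    (by simp [thetaLam_zero_right]) (fun s _ => (hB s).continuousAt.continuousWithinAt)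
    (fun s _ => (hB s).hasDerivWithinAt) hgrad ⟨ht, le_rfl⟩

/-- Growth estimate of a λ-concave function along its gradient curve
(linear model of the key inequality in the proof of Lemma 2.4). -/
theorem gradient_curve_value_growth_est
    {E : Type*} [NormedAddCommGroup E] [InnerProductSpace ℝ E]
    (lam : ℝ) (f : E → ℝ) (g : E → E)
    (hconc : ConcaveOn ℝ Set.univ (fun x => f x - lam / 2 * ‖x‖ ^ 2))
    (hg : ∀ x, HasFDerivAt f (innerSL ℝ (g x)) x) (hgc : Continuous g)
    (α : ℝ → E)
    (hα : ∀ t ∈ Set.Ici (0 : ℝ), HasDerivWithinAt α (g (α t)) (Set.Ici 0) t) :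
    ∀ t ≥ (0 : ℝ),
      f (α t) - f (α 0) ≤ ‖g (α 0)‖ ^ 2 * (thetaLam lam t + lam / 2 * (thetaLam lam t) ^ 2) :=
  gradient_curve_value_growth_est_general lam f g hconc hg α hα
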